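/- Let (Aₙ)ₙ≥1 be 2×2 nonnegative matrices with positive determinant with p₁, q₁ > 0, where A₁⋯Aₙ = (pₙ qₙ; rₙ sₙ). Then the sequences uₙ = rₙ/pₙ and vₙ = sₙ/qₙ both converge in ℝ, with uₙ nondecreasing, vₙ nonincreasing, and uₙ < vₙ for all n. -/

import Mathlib

/-!
Write `Yₙ = A₁⋯Aₙ`. Since the `Aₙ` are nonnegative with positive determinant, their diagonal
entries are positive, so multiplying on the right by `Aₙ₊₁` keeps the top row of `Yₙ` positive,
and `det Yₙ > 0` by multiplicativity. The column slopes `uₙ = rₙ/pₙ`, `vₙ = sₙ/qₙ` then satisfy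
`uₙ < vₙ` (this is `det Yₙ > 0`), and each new column of `Yₙ₊₁` is a nonnegative combination of
the two columns of `Yₙ`, so its slope lies between `uₙ` and `vₙ`. The intervals `[uₙ, vₙ]` are
therefore nested, and monotone convergence gives both limits.
-/

open Matrix Filter Topology

theorem exists_tendsto_of_monotone_of_antitone_of_le {ι α : Type*} [SemilatticeSup ι]
    [Nonempty ι] [ConditionallyCompleteLinearOrder α] [TopologicalSpace α] [OrderTopology α]
    {u v : ι → α} (hu : Monotone u) (hv : Antitone v) (huv : ∀ i, u i ≤ v i) :
    (∃ a, Tendsto u atTop (𝓝 a)) ∧ ∃ b, Tendsto v atTop (𝓝 b) := by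
  have hle : ∀ i j, u i ≤ v j := fun i j =>
    (hu le_sup_left).trans ((huv _).trans (hv le_sup_right))
  obtain ⟨i₀⟩ := ‹Nonempty ι›
  exact ⟨⟨_, tendsto_atTop_ciSup hu ⟨v i₀, Set.forall_mem_range.2 fun i => hle i i₀⟩⟩,
    ⟨_, tendsto_atTop_ciInf hv ⟨u i₀, Set.forall_mem_range.2 fun j => hle i₀ j⟩⟩⟩

namespace Matrix

variable {M A : Matrix (Fin 2) (Fin 2) ℝ}

theorem mul_fin_two_apply (M A : Matrix (Fin 2) (Fin 2) ℝ) (i j : Fin 2) :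
    (M * A) i j = M i 0 * A 0 j + M i 1 * A 1 j := by
  simp [mul_apply, Fin.sum_univ_two]

theorem diag_pos_of_nonneg_of_det_pos (hA : ∀ i j, 0 ≤ A i j) (hdet : 0 < A.det) :
    0 < A 0 0 ∧ 0 < A 1 1 := by
  rw [det_fin_two] at hdet
  have hdiag : 0 < A 0 0 * A 1 1 := by nlinarith [mul_nonneg (hA 0 1) (hA 1 0)]
  exact (pos_and_pos_or_neg_and_neg_of_mul_pos hdiag).resolve_right
    fun h => (hA 0 0).not_gt h.1

theorem mul_top_row_pos (hp : 0 < M 0 0) (hq : 0 < M 0 1) (hA : ∀ i j, 0 ≤ A i j)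
    (hdet : 0 < A.det) : 0 < (M * A) 0 0 ∧ 0 < (M * A) 0 1 := by
  obtain ⟨ha, hd⟩ := diag_pos_of_nonneg_of_det_pos hA hdet
  simp only [mul_fin_two_apply]
  exact ⟨by nlinarith [mul_nonneg hq.le (hA 1 0)], by nlinarith [mul_nonneg hp.le (hA 0 1)]⟩

noncomputable def colSlope (M : Matrix (Fin 2) (Fin 2) ℝ) (j : Fin 2) : ℝ := M 1 j / M 0 j

theorem colSlope_zero_lt_colSlope_one (hp : 0 < M 0 0) (hq : 0 < M 0 1) (hdet : 0 < M.det) :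
    M.colSlope 0 < M.colSlope 1 := by
  rw [det_fin_two] at hdet
  rw [colSlope, colSlope, div_lt_div_iff₀ hp hq]
  linarith

theorem colSlope_zero_le_mul (hp : 0 < M 0 0) (hp' : 0 < (M * A) 0 0) (hdet : 0 ≤ M.det)
    (hc : 0 ≤ A 1 0) : M.colSlope 0 ≤ (M * A).colSlope 0 := by
  rw [det_fin_two] at hdet
  rw [colSlope, colSlope, div_le_div_iff₀ hp hp', mul_fin_two_apply, mul_fin_two_apply]
  nlinarith [mul_nonneg hc hdet]

theorem colSlope_one_mul_le (hq : 0 < M 0 1) (hq' : 0 < (M * A) 0 1) (hdet : 0 ≤ M.det)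
    (hb : 0 ≤ A 0 1) : (M * A).colSlope 1 ≤ M.colSlope 1 := by
  rw [det_fin_two] at hdet
  rw [colSlope, colSlope, div_le_div_iff₀ hq' hq, mul_fin_two_apply, mul_fin_two_apply]
  nlinarith [mul_nonneg hb hdet]

end Matrix

/-- The slope sequences `uₙ = rₙ/pₙ` and `vₙ = sₙ/qₙ` of the partial products `A₁⋯Aₙ` are
respectively nondecreasing and nonincreasing, satisfy `uₙ < vₙ`, and both converge in `ℝ`. -/
theorem stmt10 (A : ℕ → Matrix (Fin 2) (Fin 2) ℝ)
    (hA : ∀ n i j, 0 ≤ A n i j) (hdet : ∀ n, 0 < (A n).det)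
    (Y : ℕ → Matrix (Fin 2) (Fin 2) ℝ)
    (hY : ∀ n, Y n = ((List.range n).map (fun i => A (i + 1))).prod)
    (hp1 : 0 < Y 1 0 0) (hq1 : 0 < Y 1 0 1) :
    (∀ n, 1 ≤ n → Y n 1 0 / Y n 0 0 ≤ Y (n + 1) 1 0 / Y (n + 1) 0 0) ∧
    (∀ n, 1 ≤ n → Y (n + 1) 1 1 / Y (n + 1) 0 1 ≤ Y n 1 1 / Y n 0 1) ∧
    (∀ n, 1 ≤ n → Y n 1 0 / Y n 0 0 < Y n 1 1 / Y n 0 1) ∧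
    (∃ Lu : ℝ, Tendsto (fun n => Y n 1 0 / Y n 0 0) atTop (nhds Lu)) ∧
    (∃ Lv : ℝ, Tendsto (fun n => Y n 1 1 / Y n 0 1) atTop (nhds Lv)) := by
  have hstep : ∀ n, Y (n + 1) = Y n * A (n + 1) := fun n => by
    simp [hY, List.range_succ]
  have hpos : ∀ n, 1 ≤ n → 0 < Y n 0 0 ∧ 0 < Y n 0 1 ∧ 0 < (Y n).det := by
    refine Nat.le_induction ⟨hp1, hq1, by simpa [hY] using hdet 1⟩ fun n _ ⟨hp, hq, hd⟩ => ?_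
    rw [hstep, det_mul]
    obtain ⟨hp', hq'⟩ := mul_top_row_pos hp hq (hA (n + 1)) (hdet (n + 1))
    exact ⟨hp', hq', mul_pos hd (hdet _)⟩
  have hu : ∀ n, 1 ≤ n → (Y n).colSlope 0 ≤ (Y (n + 1)).colSlope 0 := fun n hn => by
    obtain ⟨hp, -, hd⟩ := hpos n hn
    have hp' := (hpos (n + 1) (by omega)).1
    rw [hstep] at hp' ⊢
    exact colSlope_zero_le_mul hp hp' hd.le (hA _ 1 0)
  have hv : ∀ n, 1 ≤ n → (Y (n + 1)).colSlope 1 ≤ (Y n).colSlope 1 := fun n hn => by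
    obtain ⟨-, hq, hd⟩ := hpos n hn
    have hq' := (hpos (n + 1) (by omega)).2.1
    rw [hstep] at hq' ⊢
    exact colSlope_one_mul_le hq hq' hd.le (hA _ 0 1)
  have hlt : ∀ n, 1 ≤ n → (Y n).colSlope 0 < (Y n).colSlope 1 := fun n hn =>
    colSlope_zero_lt_colSlope_one (hpos n hn).1 (hpos n hn).2.1 (hpos n hn).2.2
  -- `Y 0 = 1` has second slope `1 / 0 = 0`, so the slopes are monotone only from `n = 1` on
  obtain ⟨⟨Lu, hLu⟩, ⟨Lv, hLv⟩⟩ := exists_tendsto_of_monotone_of_antitone_of_le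
    (u := fun n => (Y (n + 1)).colSlope 0) (v := fun n => (Y (n + 1)).colSlope 1)
    (monotone_nat_of_le_succ fun n => hu (n + 1) (by omega))
    (antitone_nat_of_succ_le fun n => hv (n + 1) (by omega)) fun n => (hlt (n + 1) (by omega)).le
  exact ⟨hu, hv, hlt, ⟨Lu, (tendsto_add_atTop_iff_nat 1).1 hLu⟩,
    ⟨Lv, (tendsto_add_atTop_iff_nat 1).1 hLv⟩⟩
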